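/- Let P be a program and let L = (L⁺, L⁻) be a pair of sets of atoms of P. If M is a stable model of P consistent with L (i.e., L⁺ ⊆ M and L⁻ ∩ M = ∅), then M ∖ L⁺ is a stable model of the simplified program [P]_L. -/
import Mathlib


/-- A clause of a propositional logic program: an optional head (a definite
clause if `head = some h`, a constraint if `head = none`), a positive body
and a negative body. -/
structure LPClause (α : Type) where
  head : Option α
  pos : Finset α
  neg : Finset α
deriving DecidableEq

/-- A program is a finite set of clauses. -/
abbrev LPProgram (α : Type) := Finset (LPClause α)

/-- The atoms occurring in a clause. -/
def LPClause.atoms {α : Type} [DecidableEq α] (c : LPClause α) : Finset α :=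
  c.head.toFinset ∪ c.pos ∪ c.neg

/-- The atoms occurring in a program. -/
def LPProgram.atoms {α : Type} [DecidableEq α] (P : LPProgram α) : Finset α :=
  P.sup LPClause.atoms

/-- `N` is closed under the Horn rules of the reduct `P^M`: for every definite
clause of `P` whose negative body is disjoint from `M`, if its positive body
is contained in `N` then so is its head. -/
def ClosedUnder {α : Type} (P : LPProgram α) (M : Finset α) (N : Set α) : Prop :=
  ∀ c ∈ P, ∀ h : α, c.head = some h → (∀ b ∈ c.neg, b ∉ M) →
    (↑c.pos : Set α) ⊆ N → h ∈ N

/-- `M` is a stable model of `P`: `M` is the least set closed under the rules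
of the reduct `P^M` (i.e. `M = lm(P^M)`), and `M` satisfies every constraint
of `P`. -/
def IsStable {α : Type} (P : LPProgram α) (M : Finset α) : Prop :=
  ClosedUnder P M ↑M ∧ (∀ N : Set α, ClosedUnder P M N → ↑M ⊆ N) ∧
  ∀ c ∈ P, c.head = none → ¬(c.pos ⊆ M ∧ ∀ b ∈ c.neg, b ∉ M)

/-- If `P'` is the simplification `[P]_L` of `P` with respect to the pair of
sets of atoms `L = (Lp, Ln)`, and `M` is a stable model of `P` consistent with
`L` (i.e. `Lp ⊆ M` and `Ln ∩ M = ∅`), then `M \ Lp` is a stable model of `P'`. -/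
theorem stmt_1 {α : Type} [DecidableEq α] (P P' : LPProgram α) (Lp Ln : Finset α)
    (hLp : Lp ⊆ P.atoms) (hLn : Ln ⊆ P.atoms)
    (hP' : ∀ c', c' ∈ P' ↔ ∃ c ∈ P,
      c.pos ∩ Ln = ∅ ∧ c.neg ∩ Lp = ∅ ∧
      (∀ h, c.head = some h → h ∉ Lp ∪ Ln) ∧
      c' = ⟨c.head, c.pos \ Lp, c.neg \ Ln⟩)
    (M : Finset α) (hM : IsStable P M) (hMp : Lp ⊆ M) (hMn : Ln ∩ M = ∅) :
    IsStable P' (M \ Lp) := by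
  obtain ⟨hcl, hmin, hcon⟩ := hM
  have hLnM : ∀ b ∈ Ln, b ∉ M := by
    intro b hb hbM
    have : b ∈ Ln ∩ M := Finset.mem_inter.mpr ⟨hb, hbM⟩
    simp [hMn] at this
  -- key translation lemmas
  have negM : ∀ (c : LPClause α), c ∈ P → c.neg ∩ Lp = ∅ →
      (∀ b ∈ c.neg \ Ln, b ∉ M \ Lp) → ∀ b ∈ c.neg, b ∉ M := by
    intro c _ hnp hneg b hb hbM
    by_cases hbLn : b ∈ Ln
    · exact hLnM b hbLn hbM
    · have hbLp : b ∉ Lp := by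
        intro hbLp
        have : b ∈ c.neg ∩ Lp := Finset.mem_inter.mpr ⟨hb, hbLp⟩
        simp [hnp] at this
      exact hneg b (Finset.mem_sdiff.mpr ⟨hb, hbLn⟩) (Finset.mem_sdiff.mpr ⟨hbM, hbLp⟩)
  refine ⟨?_, ?_, ?_⟩
  · -- closed under reduct rules
    intro c' hc' h hh hneg hpos
    obtain ⟨c, hcP, hpn, hnp, hhead, rfl⟩ := (hP' c').mp hc'
    simp only at hh hneg hpos
    have hnegM := negM c hcP hnp hneg
    have hposM : (↑c.pos : Set α) ⊆ ↑M := by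
      intro b hb
      simp only [Finset.mem_coe] at hb ⊢
      by_cases hbLp : b ∈ Lp
      · exact hMp hbLp
      · have := hpos (by simp [Finset.mem_sdiff, hb, hbLp] : b ∈ (↑(c.pos \ Lp) : Set α))
        simp only [Finset.coe_sdiff, Set.mem_diff, Finset.mem_coe] at this
        exact this.1
    have hhM : h ∈ M := hcl c hcP h hh hnegM hposM
    have hhLp : h ∉ Lp := fun hc => hhead h hh (Finset.mem_union_left _ hc)
    simp [Finset.mem_sdiff, hhM, hhLp]
  · -- minimality
    intro N hN
    have hclosed : ClosedUnder P M ((N ∪ ↑Lp) ∩ ↑M) := by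
      intro c hcP h hh hneg hpos
      have hposM : (↑c.pos : Set α) ⊆ ↑M := fun b hb => (hpos hb).2
      have hhM : h ∈ M := hcl c hcP h hh hneg hposM
      by_cases hhLp : h ∈ Lp
      · exact ⟨Or.inr hhLp, hhM⟩
      · have hc' : (⟨c.head, c.pos \ Lp, c.neg \ Ln⟩ : LPClause α) ∈ P' := by
          refine (hP' _).mpr ⟨c, hcP, ?_, ?_, ?_, rfl⟩
          · refine Finset.eq_empty_iff_forall_notMem.mpr fun b hb => ?_
            rw [Finset.mem_inter] at hb
            exact hLnM b hb.2 (hposM hb.1)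
          · refine Finset.eq_empty_iff_forall_notMem.mpr fun b hb => ?_
            rw [Finset.mem_inter] at hb
            exact hneg b hb.1 (hMp hb.2)
          · intro h' hh'
            rw [hh] at hh'
            injection hh' with hh''
            subst hh''
            intro hmem
            rcases Finset.mem_union.mp hmem with h1 | h1
            · exact hhLp h1
            · exact hLnM _ h1 hhM
        have hnN : h ∈ N := by
          refine hN _ hc' h (by simp [hh]) ?_ ?_
          · intro b hb hbM
            rw [Finset.mem_sdiff] at hb
            exact hneg b hb.1 (Finset.mem_sdiff.mp hbM).1
          · intro b hb
            simp only [Finset.coe_sdiff, Set.mem_diff, Finset.mem_coe] at hb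
            rcases (hpos hb.1).1 with h1 | h1
            · exact h1
            · exact absurd h1 hb.2
        exact ⟨Or.inl hnN, hhM⟩
    intro x hx
    simp only [Finset.coe_sdiff, Set.mem_diff, Finset.mem_coe] at hx
    have := hmin _ hclosed hx.1
    rcases this.1 with h1 | h1
    · exact h1
    · exact absurd h1 hx.2
  · -- constraints
    intro c' hc' hhead ⟨hpos, hneg⟩
    obtain ⟨c, hcP, hpn, hnp, _, rfl⟩ := (hP' c').mp hc'
    simp only at hhead hpos hneg
    refine hcon c hcP hhead ⟨?_, negM c hcP hnp hneg⟩
    intro b hb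
    by_cases hbLp : b ∈ Lp
    · exact hMp hbLp
    · exact (Finset.mem_sdiff.mp (hpos (Finset.mem_sdiff.mpr ⟨hb, hbLp⟩))).1
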